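/- arXiv:2404.04368 — 6 statements merged into one kernel-verified Lean document; each statement's English description precedes it below -/
import Mathlib

section
/- Let R be a nontrivial commutative ring and let d, n ≥ 1 with D = d + n. For every primitive d-lattice Λ in R^D there exists g ∈ SL_D(R) such that g(R^d × {0}) = Λ, where R^d × {0} denotes the R-submodule of R^D generated by the first d standard basis vectors. In particular, SL_D(R) acts transitively on the set of primitive d-lattices in R^D. -/
/-- The `R`-submodule `R^d × {0}` of `R^(d+n)` generated by the first `d`
standard basis vectors, i.e. the vectors whose last `n` coordinates vanish. -/
def stdLattice (R : Type*) [CommRing R] (d n : ℕ) : Submodule R (Fin (d + n) → R) where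
  carrier := {x | ∀ i : Fin (d + n), d ≤ (i : ℕ) → x i = 0}
  add_mem' := fun ha hb i hi => by simp [ha i hi, hb i hi]
  zero_mem' := fun i _ => rfl
  smul_mem' := fun c x hx i hi => by simp [hx i hi]

/-- A submodule `Λ` of `R^(d+n)` is a primitive `d`-lattice if it is a free
`R`-module of rank `d` and the quotient module is a free `R`-module of rank `n`. -/
def IsPrimitiveLattice (R : Type*) [CommRing R] (d n : ℕ)
    (Λ : Submodule R (Fin (d + n) → R)) : Prop :=
  Module.Free R Λ ∧ Module.rank R Λ = d ∧
    Module.Free R ((Fin (d + n) → R) ⧸ Λ) ∧ Module.rank R ((Fin (d + n) → R) ⧸ Λ) = n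

/-!
A basis of `Λ` together with lifts of a basis of the free quotient `R^D ⧸ Λ` is a basis of `R^D`.
The matrix whose columns are this basis maps `R^d × {0}` onto `Λ` and has unit determinant;
dividing one of its last `n` columns by the determinant puts it in `SL_D(R)` without changing
the image of `R^d × {0}`.
-/

open Module Submodule

theorem Submodule.exists_basis_inl_eq_of_basis_quotient {R M ι κ : Type*} [Ring R] [AddCommGroup M] [Module R M]
    (Λ : Submodule R M) (bΛ : Basis ι R Λ) (bQ : Basis κ R (M ⧸ Λ)) :
    ∃ B : Basis (ι ⊕ κ) R M, ∀ i, B (.inl i) = bΛ i := by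
  have : Module.Projective R (M ⧸ Λ) := .of_basis bQ
  obtain ⟨s, hs⟩ := Module.projective_lifting_property Λ.mkQ LinearMap.id Λ.mkQ_surjective
  obtain ⟨e, he⟩ := (LinearMap.exact_subtype_mkQ Λ).splitSurjectiveEquiv
    Λ.injective_subtype ⟨s, hs⟩
  exact ⟨(bΛ.prod bQ).map e.symm, fun i => by
    simpa using (LinearMap.congr_fun he.1 (bΛ i)).symm⟩

theorem Module.Basis.exists_det_unitsSMul_eq_one {R M ι : Type*} [CommRing R] [AddCommGroup M]
    [Module R M] [Fintype ι] [DecidableEq ι] (e B : Basis ι R M) (i₀ : ι) :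
    ∃ w : ι → Rˣ, (∀ i ≠ i₀, w i = 1) ∧ e.det (B.unitsSMul w) = 1 := by
  obtain ⟨u, hu⟩ := e.isUnit_det B
  refine ⟨Function.update 1 i₀ u⁻¹, fun i hi => Function.update_of_ne hi _ _, ?_⟩
  rw [← e.det_mul_det B, Basis.det_unitsSMul_self, ← hu, ← Units.coe_prod,
    Finset.prod_update_of_mem (Finset.mem_univ _)]
  simp

theorem stdLattice_eq_span (R : Type*) [CommRing R] (d n : ℕ) :
    stdLattice R d n = span R (Pi.basisFun R (Fin (d + n)) '' Set.range (Fin.castAdd n)) := by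
  ext x
  rw [Basis.mem_span_image]
  simp only [stdLattice, Set.subset_def, SetLike.mem_coe, Finsupp.mem_support_iff,
    Pi.basisFun_repr, Set.mem_range]
  change (∀ i : Fin (d + n), d ≤ i → x i = 0) ↔ _
  refine forall_congr' fun i => ?_
  rw [not_imp_comm, not_exists]
  refine imp_congr_left ⟨fun hi y hy => ?_, fun h => ?_⟩
  · subst hy
    exact hi.not_gt y.2
  · by_contra! hi
    exact h ⟨i, hi⟩ rfl

theorem Pi.basisFun_toMatrix_col {R ι : Type*} [CommRing R] [Fintype ι]
    (B : ι → ι → R) (j : ι) : ((Pi.basisFun R ι).toMatrix B).col j = B j := by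
  ext i
  simp [Basis.toMatrix_apply]

theorem map_mulVecLin_toMatrix_stdLattice {R : Type*} [CommRing R] {d n : ℕ}
    (B : Basis (Fin (d + n)) R (Fin (d + n) → R)) :
    (stdLattice R d n).map ((Pi.basisFun R _).toMatrix B).mulVecLin =
      span R (Set.range (B ∘ Fin.castAdd n)) := by
  rw [stdLattice_eq_span, map_span, Set.image_image, ← Set.range_comp]
  congr! with i
  simp [Pi.basisFun_toMatrix_col]

theorem Module.Basis.span_range_coe {R M ι : Type*} [Ring R] [AddCommGroup M] [Module R M]
    {Λ : Submodule R M} (b : Basis ι R Λ) : span R (Set.range fun i => (b i : M)) = Λ := by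
  rw [Set.range_comp' Subtype.val b, ← Λ.coe_subtype, ← map_span, b.span_eq,
    Submodule.map_top, range_subtype]

theorem sl_transitive_on_primitive_lattices_general
    (R : Type*) [CommRing R] [Nontrivial R] (d n : ℕ) (hn : 1 ≤ n)
    (Λ : Submodule R (Fin (d + n) → R)) (hΛ : IsPrimitiveLattice R d n Λ) :
    ∃ g : Matrix.SpecialLinearGroup (Fin (d + n)) R,
      Submodule.map
        (Matrix.mulVecLin (g : Matrix (Fin (d + n)) (Fin (d + n)) R))
        (stdLattice R d n) = Λ := by
  obtain ⟨hfree, hrank, hfreeQ, hrankQ⟩ := hΛ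
  have : Module.Finite R Λ := Module.finite_of_rank_eq_nat hrank
  have : Module.Finite R (_ ⧸ Λ) := Module.finite_of_rank_eq_nat hrankQ
  let bΛ := Module.finBasisOfFinrankEq R Λ (Module.finrank_eq_of_rank_eq hrank)
  let bQ := Module.finBasisOfFinrankEq R _ (Module.finrank_eq_of_rank_eq hrankQ)
  obtain ⟨B, hB⟩ := Λ.exists_basis_inl_eq_of_basis_quotient bΛ bQ
  let i₀ : Fin (d + n) := Fin.natAdd d ⟨0, hn⟩
  obtain ⟨w, hw₁, hwdet⟩ :=
    (Pi.basisFun R _).exists_det_unitsSMul_eq_one (B.reindex finSumFinEquiv) i₀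
  set B' := (B.reindex finSumFinEquiv).unitsSMul w
  refine ⟨⟨(Pi.basisFun R _).toMatrix B', by rwa [← Basis.det_apply]⟩, ?_⟩
  have hB' : B' ∘ Fin.castAdd n = fun i => (bΛ i : Fin (d + n) → R) := by
    funext i
    have : Fin.castAdd n i ≠ i₀ := fun h => i.2.ne (by simpa [i₀, Fin.ext_iff] using h)
    rw [Function.comp_apply, Basis.unitsSMul_apply, hw₁ _ this, one_smul, Basis.reindex_apply,
      finSumFinEquiv_symm_apply_castAdd, hB]
  rw [map_mulVecLin_toMatrix_stdLattice, hB', bΛ.span_range_coe]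

/-- `SL_D(R)` acts transitively on the set of primitive `d`-lattices in `R^D`,
`D = d + n`: every primitive `d`-lattice is the image of `R^d × {0}` by some
`g ∈ SL_D(R)`. -/
theorem sl_transitive_on_primitive_lattices
    (R : Type*) [CommRing R] [Nontrivial R] (d n : ℕ) (hd : 1 ≤ d) (hn : 1 ≤ n)
    (Λ : Submodule R (Fin (d + n) → R)) (hΛ : IsPrimitiveLattice R d n Λ) :
    ∃ g : Matrix.SpecialLinearGroup (Fin (d + n)) R,
      Submodule.map
        (Matrix.mulVecLin (g : Matrix (Fin (d + n)) (Fin (d + n)) R))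
        (stdLattice R d n) = Λ :=
  sl_transitive_on_primitive_lattices_general R d n hn Λ hΛ
end

section
/- Let A be a finite commutative ring and let d, n ≥ 1 with D = d + n. Let T be the subgroup of SL_D(A) consisting of block upper triangular matrices [[α, γ],[0, δ]] with α a d×d block, γ a d×n block and δ an n×n block. Then card(T) · card(A^×) = card(GL_d(A)) · card(GL_n(A)) · card(A)^{dn}. -/
/-!
Reading off the two diagonal blocks and the upper right block identifies `T` with
`{(α, δ) ∈ GL_d(A) × GL_n(A) | det α · det δ = 1} × M_{d×n}(A)`. The first factor is the kernel of
the homomorphism `(α, δ) ↦ det α · det δ` onto `A^×`, which is surjective as soon as `d ≥ 1`.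
-/

namespace Matrix

variable {m n A : Type*} [Fintype m] [DecidableEq m] [Fintype n] [DecidableEq n] [CommRing A]

namespace GeneralLinearGroup

variable (m n A) in
def detMulDet : GL m A × GL n A →* Aˣ :=
  det.comp (MonoidHom.fst _ _) * det.comp (MonoidHom.snd _ _)

@[simp]
lemma val_detMulDet (p : GL m A × GL n A) :
    (detMulDet m n A p : A) = (p.1 : Matrix m m A).det * (p.2 : Matrix n n A).det := by
  simp [detMulDet]

lemma detMulDet_surjective [Nonempty m] : Function.Surjective (detMulDet m n A) := fun u ↦ by
  obtain ⟨a, rfl⟩ := det_surjective (n := m) u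
  exact ⟨(a, 1), by simp [detMulDet]⟩

noncomputable def kerDetMulDetEquiv :
    (detMulDet m n A).ker ≃ {p : Matrix m m A × Matrix n n A // p.1.det * p.2.det = 1} where
  toFun g := ⟨((g.1.1 : Matrix m m A), (g.1.2 : Matrix n n A)), by
    simpa using congrArg Units.val (MonoidHom.mem_ker.1 g.2)⟩
  invFun p := ⟨(mk'' p.1.1 (.of_mul_eq_one _ p.2),
      mk'' p.1.2 (.of_mul_eq_one _ ((mul_comm p.1.2.det _).trans p.2))),
    MonoidHom.mem_ker.2 (Units.ext (by simpa using p.2))⟩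
  left_inv _ := by ext <;> rfl
  right_inv _ := rfl

end GeneralLinearGroup

def blockTriangularEquiv :
    {M : Matrix (m ⊕ n) (m ⊕ n) A // M.det = 1 ∧ M.toBlocks₂₁ = 0} ≃
      {p : Matrix m m A × Matrix n n A // p.1.det * p.2.det = 1} × Matrix m n A where
  toFun M := (⟨(M.1.toBlocks₁₁, M.1.toBlocks₂₂), by
      have hdet := M.2.1
      rwa [← fromBlocks_toBlocks M.1, M.2.2, det_fromBlocks_zero₂₁] at hdet⟩,
    M.1.toBlocks₁₂)
  invFun p := ⟨fromBlocks p.1.1.1 p.2 0 p.1.1.2, by rw [det_fromBlocks_zero₂₁, p.1.2], rfl⟩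
  left_inv M := Subtype.ext (ext_iff_blocks.2 ⟨rfl, rfl, M.2.2.symm, rfl⟩)
  right_inv _ := rfl

lemma card_blockTriangular_mul_card_units [Finite A] [Nonempty m] :
    Nat.card {M : Matrix (m ⊕ n) (m ⊕ n) A // M.det = 1 ∧ M.toBlocks₂₁ = 0} * Nat.card Aˣ =
      Nat.card (GL m A) * Nat.card (GL n A) * Nat.card A ^ (Nat.card m * Nat.card n) := by
  have hker : Nat.card (GeneralLinearGroup.detMulDet m n A).ker * Nat.card Aˣ =
      Nat.card (GL m A) * Nat.card (GL n A) := by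
    rw [← Nat.card_prod (GL m A), ← (GeneralLinearGroup.detMulDet m n A).ker.card_mul_index,
      Subgroup.index_ker, MonoidHom.range_eq_top_of_surjective _
        (GeneralLinearGroup.detMulDet_surjective (n := n) (A := A)), Subgroup.card_top]
  have hblocks : Nat.card (Matrix m n A) = Nat.card A ^ (Nat.card m * Nat.card n) := by
    rw [Matrix, Nat.card_fun, Nat.card_fun, ← pow_mul, mul_comm]
  rw [Nat.card_congr blockTriangularEquiv, Nat.card_prod,
    ← Nat.card_congr GeneralLinearGroup.kerDetMulDetEquiv, hblocks, mul_right_comm, hker]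

end Matrix

open Matrix

lemma Fin.forall_natAdd_castAdd_iff {d n : ℕ} {P : Fin (d + n) → Fin (d + n) → Prop} :
    (∀ i j : Fin (d + n), d ≤ (i : ℕ) → (j : ℕ) < d → P i j) ↔
      ∀ (b : Fin n) (a : Fin d), P (Fin.natAdd d b) (Fin.castAdd n a) := by
  refine ⟨fun h b a ↦ h _ _ (by simp) (by simp), fun h i j hi hj ↦ ?_⟩
  induction i using Fin.addCases with
  | left i => exact absurd hi (by simp)
  | right b =>
    induction j using Fin.addCases with
    | left a => exact h b a
    | right _ => exact absurd hj (by simp)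

theorem card_block_upper_triangular_sl_general
    (A : Type*) [CommRing A] [Finite A] (d n : ℕ) (hd : 1 ≤ d) :
    Nat.card {g : Matrix.SpecialLinearGroup (Fin (d + n)) A //
        ∀ i j : Fin (d + n), d ≤ (i : ℕ) → (j : ℕ) < d →
          (g : Matrix (Fin (d + n)) (Fin (d + n)) A) i j = 0} *
      Nat.card Aˣ =
    Nat.card (Matrix.GeneralLinearGroup (Fin d) A) *
      Nat.card (Matrix.GeneralLinearGroup (Fin n) A) * Nat.card A ^ (d * n) := by
  have : Nonempty (Fin d) := ⟨⟨0, hd⟩⟩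
  convert card_blockTriangular_mul_card_units (m := Fin d) (n := Fin n) (A := A) using 2
  · refine Nat.card_congr <| (Equiv.subtypeSubtypeEquivSubtypeInter (fun M ↦ M.det = 1)
      fun M : Matrix (Fin (d + n)) (Fin (d + n)) A ↦
        ∀ i j : Fin (d + n), d ≤ (i : ℕ) → (j : ℕ) < d → M i j = 0).trans <|
      Equiv.subtypeEquiv (reindex finSumFinEquiv.symm finSumFinEquiv.symm) fun M ↦ ?_
    rw [det_reindex_self, Fin.forall_natAdd_castAdd_iff]
    simp [← Matrix.ext_iff, toBlocks₂₁]
  · simp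

/-- For a finite commutative ring `A` and `D = d + n`, the cardinality of the subgroup `T`
of `SL_D(A)` of block upper triangular matrices `[[α, γ],[0, δ]]` (with `α` of size `d × d`)
satisfies `card T · card A^× = card GL_d(A) · card GL_n(A) · card A^{dn}`. -/
theorem card_block_upper_triangular_sl
    (A : Type*) [CommRing A] [Finite A] (d n : ℕ) (hd : 1 ≤ d) (hn : 1 ≤ n) :
    Nat.card {g : Matrix.SpecialLinearGroup (Fin (d + n)) A //
        ∀ i j : Fin (d + n), d ≤ (i : ℕ) → (j : ℕ) < d →
          (g : Matrix (Fin (d + n)) (Fin (d + n)) A) i j = 0} *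
      Nat.card Aˣ =
    Nat.card (Matrix.GeneralLinearGroup (Fin d) A) *
      Nat.card (Matrix.GeneralLinearGroup (Fin n) A) * Nat.card A ^ (d * n) :=
  card_block_upper_triangular_sl_general A d n hd
end

section
/- Let O be a discrete valuation ring whose residue field is finite of cardinality q, let π be a uniformizer of O, and let D ≥ 1. For every N ≥ 1, let H_N be the kernel of the group homomorphism SL_D(O) → SL_D(O/π^N O) given by reduction of entries modulo π^N O. Then H_N has finite index in SL_D(O) and [SL_D(O) : H_N] = q^{N(D²−1) − D(D+1)/2 + 1} · ∏_{i=2}^{D} (q^i − 1). -/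
/-!
The reduction map `SL_D(O) → SL_D(O/π^N)` is surjective, so the index is `|SL_D(R)|` for the
finite local ring `R = O/π^N`, whose residue field `O/π` has `q` elements and whose maximal ideal
`𝔪` has `q^(N-1)`. Since `GL_D(R) → GL_D(O/π)` and `Rˣ → (O/π)ˣ` are onto with kernels
`1 + M_D(𝔪)` and `1 + 𝔪` (a lift of a unit is a unit because reduction is a local homomorphism),
and `det : GL_D → units` is onto with kernel `SL_D`, we get
`|SL_D(R)| = |SL_D(O/π)| · |𝔪|^(D²-1)`; finally `|SL_D(𝔽_q)| = |GL_D(𝔽_q)| / (q - 1)`.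
-/

open Matrix

theorem Nat.prod_range_pow_sub_pow (X n : ℕ) :
    ∏ i ∈ Finset.range n, (X ^ n - X ^ i) =
      X ^ n.choose 2 * ∏ i ∈ Finset.Icc 1 n, (X ^ i - 1) := by
  induction n with
  | zero => simp
  | succ n ih =>
    have hshift : ∀ i ∈ Finset.range n, X ^ (n + 1) - X ^ (i + 1) = X * (X ^ n - X ^ i) :=
      fun i _ ↦ by rw [Nat.mul_sub, pow_succ', pow_succ']
    rw [Finset.prod_range_succ', Finset.prod_congr rfl hshift, Finset.prod_mul_distrib,
      Finset.prod_const, Finset.card_range, ih, Finset.prod_Icc_succ_top (by omega),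
      pow_zero, Nat.choose_succ_succ', Nat.choose_one_right]
    ring

theorem Nat.cast_choose_two_add_mul_eq {D N : ℕ} (hD : 1 ≤ D) (hN : 1 ≤ N) :
    ((D.choose 2 + (N - 1) * (D * D - 1) : ℕ) : ℤ) =
      (N : ℤ) * ((D : ℤ) ^ 2 - 1) - (D : ℤ) * ((D : ℤ) + 1) / 2 + 1 := by
  have htri : (D + 1) * D = (D.choose 2 + D) * 2 := by
    simpa [Nat.choose_succ_succ', add_comm] using Nat.add_one_mul_choose_eq D 1
  have htri' : (D : ℤ) * (D + 1) = 2 * (D.choose 2 + D) := by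
    rw [mul_comm, mul_comm 2]; exact_mod_cast htri
  rw [htri', Int.mul_ediv_cancel_left _ two_ne_zero]
  push_cast [Nat.cast_sub hN, Nat.cast_sub (Nat.mul_pos hD hD : 1 ≤ D * D)]
  linear_combination -htri'

theorem MonoidHom.card_ker_mul_card_of_surjective {G H : Type*} [Group G] [Group H]
    {f : G →* H} (hf : Function.Surjective f) : Nat.card f.ker * Nat.card H = Nat.card G := by
  rw [← Subgroup.card_mul_index f.ker, Subgroup.index_ker, f.range_eq_top.2 hf, Subgroup.card_top]

theorem RingHom.card_ker_mul_card_of_surjective {R S : Type*} [Ring R] [Ring S]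
    {f : R →+* S} (hf : Function.Surjective f) :
    Nat.card (RingHom.ker f) * Nat.card S = Nat.card R := by
  rw [← AddSubgroup.card_mul_index f.toAddMonoidHom.ker, AddSubgroup.index_ker,
    f.toAddMonoidHom.range_eq_top.2 hf, AddSubgroup.card_top]
  rfl

section Units

variable {A B : Type*} [Ring A] [Ring B] (f : A →+* B) [IsLocalHom f]

noncomputable def unitsMapKerEquivKer : (Units.map f.toMonoidHom).ker ≃ RingHom.ker f where
  toFun u := ⟨u.1 - 1, by simpa [sub_eq_zero, Units.ext_iff] using u.2⟩
  invFun a := ⟨(isUnit_of_map_unit f (1 + a.1) (by simp [RingHom.mem_ker.1 a.2])).unit, by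
    simp [Units.ext_iff, RingHom.mem_ker.1 a.2]⟩
  left_inv u := by ext; simp
  right_inv a := by ext; simp

theorem card_units_eq_card_units_mul_card_ker (hf : Function.Surjective f) :
    Nat.card Aˣ = Nat.card Bˣ * Nat.card (RingHom.ker f) := by
  rw [← MonoidHom.card_ker_mul_card_of_surjective
    (IsLocalRing.surjective_units_map_of_local_ringHom f hf ‹_›),
    Nat.card_congr (unitsMapKerEquivKer f), mul_comm]

end Units

section MapMatrix

variable {n R S : Type*} [Fintype n] [DecidableEq n] [CommRing R] [CommRing S] (f : R →+* S)

instance RingHom.isLocalHom_mapMatrix [IsLocalHom f] :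
    IsLocalHom (f.mapMatrix : Matrix n n R →+* Matrix n n S) where
  map_nonunit A hA := by
    rw [isUnit_iff_isUnit_det] at hA ⊢
    exact IsUnit.of_map f _ (by rwa [RingHom.map_det])

theorem RingHom.mapMatrix_surjective {f : R →+* S} (hf : Function.Surjective f) :
    Function.Surjective (f.mapMatrix : Matrix n n R →+* Matrix n n S) :=
  fun M ↦ ⟨M.map (Function.surjInv hf), by ext; simp [Function.surjInv_eq hf]⟩

def RingHom.kerMapMatrixEquiv :
    RingHom.ker (f.mapMatrix : Matrix n n R →+* Matrix n n S) ≃ Matrix n n (RingHom.ker f) where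
  toFun M := of fun i j ↦ ⟨M.1 i j, Matrix.ext_iff.2 (RingHom.mem_ker.1 M.2) i j⟩
  invFun M := ⟨M.map Subtype.val, RingHom.mem_ker.2 <| Matrix.ext fun i j ↦ (M i j).2⟩
  left_inv _ := rfl
  right_inv _ := rfl

end MapMatrix

namespace Matrix

section CommRing

variable {n R S : Type*} [Fintype n] [DecidableEq n] [CommRing R] [CommRing S] (f : R →+* S)

theorem SpecialLinearGroup.range_toGL_eq_ker_det :
    (SpecialLinearGroup.toGL : SpecialLinearGroup n R →* GL n R).range =
      GeneralLinearGroup.det.ker := by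
  ext g
  simpa [Units.ext_iff] using ⟨fun ⟨A, hA⟩ ↦ by simp [← hA], fun hg ↦ ⟨⟨g, hg⟩, rfl⟩⟩

theorem card_SL_mul_card_units [Nonempty n] :
    Nat.card (SpecialLinearGroup n R) * Nat.card Rˣ = Nat.card (GL n R) := by
  rw [← MonoidHom.card_ker_mul_card_of_surjective GeneralLinearGroup.det_surjective,
    ← SpecialLinearGroup.range_toGL_eq_ker_det,
    ← Nat.card_congr (MonoidHom.ofInjective SpecialLinearGroup.toGL_injective).toEquiv]

theorem SpecialLinearGroup.map_surjective [Nonempty n] [IsLocalHom f]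
    (hf : Function.Surjective f) : Function.Surjective (SpecialLinearGroup.map (n := n) f) := by
  intro B
  obtain ⟨A, hA⟩ := f.mapMatrix_surjective hf B.1
  have hdet : f A.det = 1 := by rw [RingHom.map_det, hA, B.2]
  obtain ⟨u, hu⟩ := IsUnit.of_map f _ (hdet ▸ isUnit_one)
  have hu_inv : f ↑u⁻¹ = 1 := by
    simpa [hu, hdet] using congrArg f u.inv_mul
  obtain ⟨i⟩ := ‹Nonempty n›
  -- `diag(u⁻¹, 1, …, 1)` fixes the determinant and reduces to the identity
  let d : n → R := Function.update 1 i ↑u⁻¹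
  refine ⟨⟨A * diagonal d, ?_⟩, ?_⟩
  · simp [d, det_mul, Finset.prod_update_of_mem, ← hu]
  · apply Subtype.ext
    show f.mapMatrix (A * diagonal d) = (B : Matrix n n S)
    have hd : (fun m ↦ f (d m)) = fun _ ↦ 1 := by
      ext m
      by_cases hm : m = i <;> simp [d, hm, hu_inv]
    rw [map_mul, hA, RingHom.mapMatrix_apply, diagonal_map (map_zero f), hd, diagonal_one,
      mul_one]

theorem card_GL_eq_card_GL_mul_card_ker_pow [IsLocalHom f] (hf : Function.Surjective f) :
    Nat.card (GL n R) =
      Nat.card (GL n S) * Nat.card (RingHom.ker f) ^ (Fintype.card n * Fintype.card n) := by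
  rw [card_units_eq_card_units_mul_card_ker f.mapMatrix (f.mapMatrix_surjective hf),
    Nat.card_congr ((f.kerMapMatrixEquiv).trans of.symm), Nat.card_fun, Nat.card_fun,
    Nat.card_eq_fintype_card (α := n), ← pow_mul]

theorem card_SL_eq_card_SL_mul_card_ker_pow [Nonempty n] [Finite R] [IsLocalHom f]
    (hf : Function.Surjective f) :
    Nat.card (SpecialLinearGroup n R) = Nat.card (SpecialLinearGroup n S) *
      Nat.card (RingHom.ker f) ^ (Fintype.card n * Fintype.card n - 1) := by
  have : Finite S := .of_surjective f hf
  have hsq : Fintype.card n * Fintype.card n ≠ 0 := by positivity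
  set k := Nat.card (RingHom.ker f)
  have hk : 0 < k := Nat.card_pos
  apply Nat.eq_of_mul_eq_mul_right (Nat.mul_pos (Nat.card_pos (α := Sˣ)) hk)
  calc Nat.card (SpecialLinearGroup n R) * (Nat.card Sˣ * k)
      = Nat.card (GL n R) := by
        rw [← card_units_eq_card_units_mul_card_ker f hf, card_SL_mul_card_units]
    _ = Nat.card (SpecialLinearGroup n S) * Nat.card Sˣ *
          k ^ (Fintype.card n * Fintype.card n) := by
        rw [card_GL_eq_card_GL_mul_card_ker_pow f hf, card_SL_mul_card_units]
    _ = _ := by rw [← pow_sub_one_mul hsq]; ring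

end CommRing

theorem card_SL_field (K : Type*) [Field K] [Finite K] {n : ℕ} (hn : 1 ≤ n) :
    Nat.card (SpecialLinearGroup (Fin n) K) =
      Nat.card K ^ n.choose 2 * ∏ i ∈ Finset.Icc 2 n, (Nat.card K ^ i - 1) := by
  have : Fintype K := .ofFinite K
  have : NeZero n := ⟨by omega⟩
  have hq : 1 < Nat.card K := Finite.one_lt_card
  apply Nat.eq_of_mul_eq_mul_right (Nat.sub_pos_of_lt hq)
  rw [← Nat.card_units, card_SL_mul_card_units, card_GL_field, ← Nat.card_eq_fintype_card,
    Fin.prod_univ_eq_prod_range (fun i ↦ Nat.card K ^ n - Nat.card K ^ i),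
    Nat.prod_range_pow_sub_pow, Finset.Icc_eq_cons_Ioc hn, Finset.prod_cons,
    ← Finset.Icc_add_one_left_eq_Ioc, one_add_one_eq_two, pow_one, Nat.card_units]
  ring

end Matrix

section DedekindDomain

variable {O : Type*} [CommRing O] [IsDedekindDomain O] {P : Ideal O} [P.IsPrime]

theorem Ideal.card_quotient_pow (hP : P ≠ ⊥) (N : ℕ) :
    Nat.card (O ⧸ P ^ N) = Nat.card (O ⧸ P) ^ N := by
  simpa [Submodule.cardQuot_apply] using cardQuot_pow_of_prime hP (i := N)

theorem Ideal.card_ker_factor_pow [Finite (O ⧸ P)] (hP : P ≠ ⊥) {N : ℕ} (hN : N ≠ 0) :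
    Nat.card (RingHom.ker (Ideal.Quotient.factor (Ideal.pow_le_self hN : P ^ N ≤ P))) =
      Nat.card (O ⧸ P) ^ (N - 1) := by
  apply Nat.eq_of_mul_eq_mul_right (Nat.card_pos (α := O ⧸ P))
  rw [RingHom.card_ker_mul_card_of_surjective (Ideal.Quotient.factor_surjective _),
    Ideal.card_quotient_pow hP, pow_sub_one_mul hN]

end DedekindDomain

/-- Let `O` be a discrete valuation ring with uniformizer `π` and finite residue field of
cardinality `q`, and let `D ≥ 1`. For `N ≥ 1`, the kernel `H_N` of the reduction morphism
`SL_D(O) → SL_D(O/π^N O)` has finite index, equal to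
`q^{N(D²-1) - D(D+1)/2 + 1} ∏_{i=2}^{D} (q^i - 1)`. -/
theorem index_ker_reduction_sl
    (O : Type*) [CommRing O] [IsDomain O] [IsDiscreteValuationRing O]
    (π : O) (hπ : IsLocalRing.maximalIdeal O = Ideal.span {π})
    (q : ℕ) [Finite (O ⧸ Ideal.span {π})] (hq : Nat.card (O ⧸ Ideal.span {π}) = q)
    (D : ℕ) (hD : 1 ≤ D) (N : ℕ) (hN : 1 ≤ N) :
    (MonoidHom.ker
        (Matrix.SpecialLinearGroup.map (n := Fin D)
          (Ideal.Quotient.mk (Ideal.span {π} ^ N)))).index ≠ 0 ∧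
    ((MonoidHom.ker
        (Matrix.SpecialLinearGroup.map (n := Fin D)
          (Ideal.Quotient.mk (Ideal.span {π} ^ N)))).index : ℚ) =
      (q : ℚ) ^ ((N : ℤ) * ((D : ℤ) ^ 2 - 1) - (D : ℤ) * ((D : ℤ) + 1) / 2 + 1) *
        ∏ i ∈ Finset.Icc 2 D, ((q : ℚ) ^ i - 1) := by
  set P := Ideal.span {π}
  have hPmax : P.IsMaximal := hπ ▸ IsLocalRing.maximalIdeal.isMaximal O
  let _ : Field (O ⧸ P) := Ideal.Quotient.field P
  have hP0 : P ≠ ⊥ := hπ ▸ IsDiscreteValuationRing.not_a_field O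
  have hN0 : N ≠ 0 := by omega
  have hPN : P ^ N ≤ P := Ideal.pow_le_self hN0
  have : Nontrivial (O ⧸ P ^ N) :=
    Ideal.Quotient.nontrivial_iff.2 (ne_top_of_le_ne_top hPmax.ne_top hPN)
  have : IsLocalHom (Ideal.Quotient.mk (P ^ N)) :=
    .of_surjective _ Ideal.Quotient.mk_surjective
  have : IsLocalRing (O ⧸ P ^ N) := .of_surjective _ Ideal.Quotient.mk_surjective
  have : IsLocalHom (Ideal.Quotient.factor hPN) :=
    .of_surjective _ (Ideal.Quotient.factor_surjective hPN)
  have : Finite (O ⧸ P ^ N) := Nat.finite_of_card_ne_zero <| by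
    rw [Ideal.card_quotient_pow hP0]; exact pow_ne_zero _ Nat.card_pos.ne'
  have : Nonempty (Fin D) := ⟨⟨0, hD⟩⟩
  rw [Subgroup.index_ker, MonoidHom.range_eq_top.2
    (SpecialLinearGroup.map_surjective _ Ideal.Quotient.mk_surjective), Subgroup.card_top]
  refine ⟨Nat.card_pos.ne', ?_⟩
  rw [card_SL_eq_card_SL_mul_card_ker_pow _ (Ideal.Quotient.factor_surjective hPN),
    Ideal.card_ker_factor_pow hP0 hN0, card_SL_field _ hD, hq, Fintype.card_fin,
    ← Nat.cast_choose_two_add_mul_eq hD hN, zpow_natCast]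
  push_cast [Nat.cast_sub (Nat.one_le_pow _ _ (hq ▸ Nat.card_pos))]
  ring
end

section
/- Let K be a field equipped with a surjective discrete valuation v: K^× → ℤ, and let π ∈ K with v(π) = 1. Let d, n ≥ 1, D = d + n, ℓ = lcm(d, n). Define: U⁻ = {[[I_d, 0],[β, I_n]] : β an n×d matrix over K}; U⁺ = {[[I_d, γ],[0, I_n]] : γ a d×n matrix over K}; G'' = {block diagonal matrices diag(α, δ) with α ∈ GL_d(K), δ ∈ GL_n(K), v(det α) = 0, v(det δ) = 0 and det(α)·det(δ) = 1}; Z = {diag(π^r I_d, π^s I_n) : r, s ∈ ℤ, dr + ns = 0}; and 𝒰_G = {g ∈ SL_D(K) : the upper-left d×d block α of g is invertible and ℓ divides v(det α)}. Then the product map (u⁻, g'', z, u⁺) ↦ u⁻ g'' z u⁺ is a bijection from U⁻ × G'' × Z × U⁺ onto 𝒰_G. -/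
open Matrix

/-- The lower unipotent triangular-by-blocks subgroup `U⁻`. -/
def lowerUnipotent (K : Type*) [Field K] (d n : ℕ) :
    Set (Matrix (Fin d ⊕ Fin n) (Fin d ⊕ Fin n) K) :=
  {M | ∃ β : Matrix (Fin n) (Fin d) K, M = Matrix.fromBlocks 1 0 β 1}

/-- The upper unipotent triangular-by-blocks subgroup `U⁺`. -/
def upperUnipotent (K : Type*) [Field K] (d n : ℕ) :
    Set (Matrix (Fin d ⊕ Fin n) (Fin d ⊕ Fin n) K) :=
  {M | ∃ γ : Matrix (Fin d) (Fin n) K, M = Matrix.fromBlocks 1 γ 0 1}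

/-- The block diagonal subgroup `G'' = (GL¹_d(K) × GL¹_n(K)) ∩ SL_{d+n}(K)`: block diagonal
matrices `diag(α, δ)` with `v(det α) = v(det δ) = 0` and `det α · det δ = 1`. -/
def blockDiagUnimodular (K : Type*) [Field K] (v : K → ℤ) (d n : ℕ) :
    Set (Matrix (Fin d ⊕ Fin n) (Fin d ⊕ Fin n) K) :=
  {M | ∃ (α : Matrix (Fin d) (Fin d) K) (δ : Matrix (Fin n) (Fin n) K),
    M = Matrix.fromBlocks α 0 0 δ ∧ α.det ≠ 0 ∧ δ.det ≠ 0 ∧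
      v α.det = 0 ∧ v δ.det = 0 ∧ α.det * δ.det = 1}

/-- The discrete subgroup `Z` of matrices `diag(π^r I_d, π^s I_n)` with `dr + ns = 0`. -/
def centralPart (K : Type*) [Field K] (π : K) (d n : ℕ) :
    Set (Matrix (Fin d ⊕ Fin n) (Fin d ⊕ Fin n) K) :=
  {M | ∃ r s : ℤ, (d : ℤ) * r + (n : ℤ) * s = 0 ∧
    M = Matrix.fromBlocks ((π ^ r) • (1 : Matrix (Fin d) (Fin d) K)) 0 0
      ((π ^ s) • (1 : Matrix (Fin n) (Fin n) K))}

/-- The subset `𝒰_G` of `SL_{d+n}(K)` of matrices whose upper left `d × d` block `α` is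
invertible with `lcm(d,n) ∣ v(det α)`. -/
def bigCell (K : Type*) [Field K] (v : K → ℤ) (d n : ℕ) :
    Set (Matrix (Fin d ⊕ Fin n) (Fin d ⊕ Fin n) K) :=
  {M | M.det = 1 ∧ M.toBlocks₁₁.det ≠ 0 ∧ (Nat.lcm d n : ℤ) ∣ v M.toBlocks₁₁.det}

/-!
Every `g ∈ 𝒰_G` has a unique block LDU decomposition `g = u⁻ · diag(A, E) · u⁺`: `A` is the
upper left block of `g` and `E` its Schur complement, so `det A · det E = det g = 1`. It
remains to split `diag(A, E)` uniquely as `diag(α, δ) · diag(π^r I_d, π^s I_n)` with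
`v(det α) = v(det δ) = 0`.
Since `v(det(π^r α)) = r d + v(det α)`, this forces `r d = v(det A) = -s n`, and such integers
exist exactly when `lcm(d, n) ∣ v(det A)`.
-/

section BlockLDU

variable {R : Type*} [CommRing R] {m l : Type*} [Fintype m] [DecidableEq m] [Fintype l]
  [DecidableEq l]

theorem fromBlocks_ldu (β : Matrix l m R) (A : Matrix m m R) (E : Matrix l l R)
    (γ : Matrix m l R) :
    fromBlocks 1 0 β 1 * fromBlocks A 0 0 E * fromBlocks 1 γ 0 1 =
      fromBlocks A (A * γ) (β * A) (β * A * γ + E) := by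
  simp [fromBlocks_multiply]

theorem eq_of_fromBlocks_ldu_eq {β β' : Matrix l m R} {A A' : Matrix m m R}
    {E E' : Matrix l l R} {γ γ' : Matrix m l R} (hA : IsUnit A.det)
    (h : fromBlocks 1 0 β 1 * fromBlocks A 0 0 E * fromBlocks 1 γ 0 1 =
      fromBlocks 1 0 β' 1 * fromBlocks A' 0 0 E' * fromBlocks 1 γ' 0 1) :
    β = β' ∧ A = A' ∧ E = E' ∧ γ = γ' := by
  have := A.invertibleOfIsUnitDet hA
  rw [fromBlocks_ldu, fromBlocks_ldu, fromBlocks_inj] at h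
  obtain ⟨rfl, h₁₂, h₂₁, h₂₂⟩ := h
  obtain rfl : β = β' := mul_left_injective_of_invertible A h₂₁
  obtain rfl : γ = γ' := mul_right_injective_of_invertible A h₁₂
  exact ⟨rfl, rfl, add_left_cancel h₂₂, rfl⟩

end BlockLDU

section Valuation

variable {K : Type*} [Field K] {v : K → ℤ}

theorem valuation_one (hmul : ∀ x y : K, x ≠ 0 → y ≠ 0 → v (x * y) = v x + v y) : v 1 = 0 := by
  have := hmul 1 1 one_ne_zero one_ne_zero
  rw [mul_one] at this
  omega

theorem valuation_zpow (hmul : ∀ x y : K, x ≠ 0 → y ≠ 0 → v (x * y) = v x + v y) {π : K}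
    (hπ0 : π ≠ 0) (hπ : v π = 1) (k : ℤ) : v (π ^ k) = k := by
  induction k using Int.induction_on with
  | zero => simpa using valuation_one hmul
  | succ k ih => rw [zpow_add_one₀ hπ0, hmul _ _ (zpow_ne_zero _ hπ0) hπ0, ih, hπ]
  | pred k ih =>
    have h := hmul _ _ (zpow_ne_zero (-(k : ℤ) - 1) hπ0) hπ0
    rw [← zpow_add_one₀ hπ0, sub_add_cancel, ih, hπ] at h
    omega

variable {m : Type*} [Fintype m] [DecidableEq m]

theorem det_zpow_smul (π : K) (r : ℤ) (α : Matrix m m K) :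
    (π ^ r • α).det = π ^ (r * Fintype.card m) * α.det := by
  rw [det_smul, _root_.zpow_mul, zpow_natCast]

theorem det_zpow_smul_ne_zero {π : K} (hπ0 : π ≠ 0) (r : ℤ) {α : Matrix m m K} (hα : α.det ≠ 0) :
    (π ^ r • α).det ≠ 0 := by
  rw [det_zpow_smul]
  exact mul_ne_zero (zpow_ne_zero _ hπ0) hα

theorem det_zpow_smul_mul_det_zpow_smul {l : Type*} [Fintype l] [DecidableEq l] {π : K}
    (hπ0 : π ≠ 0) (r s : ℤ) (α : Matrix m m K) (δ : Matrix l l K) :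
    (π ^ r • α).det * (π ^ s • δ).det =
      π ^ (r * Fintype.card m + s * Fintype.card l) * (α.det * δ.det) := by
  rw [det_zpow_smul, det_zpow_smul, zpow_add₀ hπ0]
  ring

theorem valuation_det_zpow_smul (hmul : ∀ x y : K, x ≠ 0 → y ≠ 0 → v (x * y) = v x + v y)
    {π : K} (hπ0 : π ≠ 0) (hπ : v π = 1) (r : ℤ) {α : Matrix m m K} (hα : α.det ≠ 0) :
    v (π ^ r • α).det = r * Fintype.card m + v α.det := by
  rw [det_zpow_smul, hmul _ _ (zpow_ne_zero _ hπ0) hα, valuation_zpow hmul hπ0 hπ]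

theorem eq_of_zpow_smul_eq_zpow_smul
    (hmul : ∀ x y : K, x ≠ 0 → y ≠ 0 → v (x * y) = v x + v y) {π : K} (hπ0 : π ≠ 0)
    (hπ : v π = 1) (hm : Fintype.card m ≠ 0) {r r' : ℤ} {α α' : Matrix m m K}
    (hα : α.det ≠ 0) (hα' : α'.det ≠ 0) (hvα : v α.det = 0) (hvα' : v α'.det = 0)
    (h : π ^ r • α = π ^ r' • α') : r = r' ∧ α = α' := by
  have hv := congrArg (fun M => v M.det) h
  simp only [valuation_det_zpow_smul hmul hπ0 hπ _ hα, valuation_det_zpow_smul hmul hπ0 hπ _ hα',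
    hvα, hvα', add_zero] at hv
  obtain rfl : r = r' := mul_right_cancel₀ (Int.natCast_ne_zero.mpr hm) hv
  exact ⟨rfl, smul_right_injective _ (zpow_ne_zero r hπ0) h⟩

end Valuation

theorem natCast_lcm_dvd_iff {d n : ℕ} {x : ℤ} :
    (Nat.lcm d n : ℤ) ∣ x ↔ (d : ℤ) ∣ x ∧ (n : ℤ) ∣ x := by
  simp only [Int.natCast_dvd, Nat.lcm_dvd_iff]

/-- The block diagonal matrices in `𝒰_G`. -/
def blockDiagCell (K : Type*) [Field K] (v : K → ℤ) (d n : ℕ) :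
    Set (Matrix (Fin d ⊕ Fin n) (Fin d ⊕ Fin n) K) :=
  {M | ∃ (A : Matrix (Fin d) (Fin d) K) (E : Matrix (Fin n) (Fin n) K),
    M = fromBlocks A 0 0 E ∧ A.det * E.det = 1 ∧ (Nat.lcm d n : ℤ) ∣ v A.det}

theorem bijOn_lowerUnipotent_blockDiagCell_upperUnipotent (K : Type*) [Field K] (v : K → ℤ)
    (d n : ℕ) :
    Set.BijOn (fun x => x.1 * x.2.1 * x.2.2)
      (lowerUnipotent K d n ×ˢ (blockDiagCell K v d n ×ˢ upperUnipotent K d n))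
      (bigCell K v d n) := by
  refine ⟨?_, ?_, ?_⟩
  · rintro ⟨_, _, _⟩ ⟨⟨β, rfl⟩, ⟨A, E, rfl, hAE, hdvd⟩, ⟨γ, rfl⟩⟩
    refine ⟨?_, ?_, ?_⟩
    · simp [det_fromBlocks_zero₂₁, hAE]
    · simpa [fromBlocks_ldu] using left_ne_zero_of_mul_eq_one hAE
    · simpa [fromBlocks_ldu] using hdvd
  · rintro ⟨_, _, _⟩ ⟨⟨β, rfl⟩, ⟨A, E, rfl, hAE, -⟩, ⟨γ, rfl⟩⟩
      ⟨_, _, _⟩ ⟨⟨β', rfl⟩, ⟨A', E', rfl, -, -⟩, ⟨γ', rfl⟩⟩ h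
    obtain ⟨rfl, rfl, rfl, rfl⟩ :=
      eq_of_fromBlocks_ldu_eq (isUnit_iff_ne_zero.mpr (left_ne_zero_of_mul_eq_one hAE)) h
    rfl
  · rintro M ⟨hdet, hA, hdvd⟩
    obtain ⟨A, B, C, D, rfl⟩ : ∃ A B C D, M = fromBlocks A B C D :=
      ⟨_, _, _, _, (fromBlocks_toBlocks M).symm⟩
    rw [toBlocks_fromBlocks₁₁] at hA hdvd
    have := A.invertibleOfIsUnitDet (isUnit_iff_ne_zero.mpr hA)
    refine ⟨(fromBlocks 1 0 (C * ⅟A) 1, fromBlocks A 0 0 (D - C * ⅟A * B),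
      fromBlocks 1 (⅟A * B) 0 1), ⟨⟨_, rfl⟩, ⟨_, _, rfl, ?_, hdvd⟩, ⟨_, rfl⟩⟩, ?_⟩
    · rw [← det_fromBlocks₁₁, hdet]
    · exact (fromBlocks_eq_of_invertible₁₁ A B C D).symm

section DiagonalFactor

variable {K : Type*} [Field K] {v : K → ℤ} {π : K} {d n : ℕ}

theorem mapsTo_mul_blockDiagUnimodular_centralPart
    (hmul : ∀ x y : K, x ≠ 0 → y ≠ 0 → v (x * y) = v x + v y)
    (hπ0 : π ≠ 0) (hπ : v π = 1) :
    Set.MapsTo (fun x => x.1 * x.2) (blockDiagUnimodular K v d n ×ˢ centralPart K π d n)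
      (blockDiagCell K v d n) := by
  rintro ⟨_, _⟩ ⟨⟨α, δ, rfl, hα, -, hvα, -, hαδ⟩, ⟨r, s, hrs, rfl⟩⟩
  refine ⟨π ^ r • α, π ^ s • δ, by simp [fromBlocks_multiply], ?_, ?_⟩
  · rw [det_zpow_smul_mul_det_zpow_smul hπ0, Fintype.card_fin, Fintype.card_fin,
      show r * d + s * n = 0 by linarith, hαδ, zpow_zero, one_mul]
  · rw [valuation_det_zpow_smul hmul hπ0 hπ r hα, hvα, add_zero, Fintype.card_fin,
      natCast_lcm_dvd_iff]
    exact ⟨dvd_mul_left _ _, -s, by linarith⟩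

theorem injOn_mul_blockDiagUnimodular_centralPart
    (hmul : ∀ x y : K, x ≠ 0 → y ≠ 0 → v (x * y) = v x + v y)
    (hπ0 : π ≠ 0) (hπ : v π = 1) (hd : 1 ≤ d) (hn : 1 ≤ n) :
    Set.InjOn (fun x => x.1 * x.2) (blockDiagUnimodular K v d n ×ˢ centralPart K π d n) := by
  rintro ⟨_, _⟩ ⟨⟨α, δ, rfl, hα, hδ, hvα, hvδ, -⟩, ⟨r, s, -, rfl⟩⟩
    ⟨_, _⟩ ⟨⟨α', δ', rfl, hα', hδ', hvα', hvδ', -⟩, ⟨r', s', -, rfl⟩⟩ h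
  simp only [fromBlocks_multiply, Matrix.mul_smul, Matrix.mul_one, Matrix.mul_zero, smul_zero,
    add_zero, zero_add, fromBlocks_inj, true_and] at h
  obtain ⟨h₁₁, h₂₂⟩ := h
  obtain ⟨rfl, rfl⟩ := eq_of_zpow_smul_eq_zpow_smul hmul hπ0 hπ (by rw [Fintype.card_fin]; omega)
    hα hα' hvα hvα' h₁₁
  obtain ⟨rfl, rfl⟩ := eq_of_zpow_smul_eq_zpow_smul hmul hπ0 hπ (by rw [Fintype.card_fin]; omega)
    hδ hδ' hvδ hvδ' h₂₂
  rfl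

theorem surjOn_mul_blockDiagUnimodular_centralPart
    (hmul : ∀ x y : K, x ≠ 0 → y ≠ 0 → v (x * y) = v x + v y)
    (hπ0 : π ≠ 0) (hπ : v π = 1) :
    Set.SurjOn (fun x => x.1 * x.2) (blockDiagUnimodular K v d n ×ˢ centralPart K π d n)
      (blockDiagCell K v d n) := by
  rintro _ ⟨A, E, rfl, hAE, hdvd⟩
  have hA : A.det ≠ 0 := left_ne_zero_of_mul_eq_one hAE
  have hE : E.det ≠ 0 := right_ne_zero_of_mul_eq_one hAE
  have hvE : v E.det = -v A.det := by
    have := hmul _ _ hA hE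
    rw [hAE, valuation_one hmul] at this
    omega
  obtain ⟨⟨r, hr⟩, ⟨s, hs⟩⟩ := natCast_lcm_dvd_iff.mp hdvd
  refine ⟨(fromBlocks (π ^ (-r) • A) 0 0 (π ^ s • E), fromBlocks (π ^ r • 1) 0 0 (π ^ (-s) • 1)),
    ⟨⟨_, _, rfl, det_zpow_smul_ne_zero hπ0 _ hA, det_zpow_smul_ne_zero hπ0 _ hE, ?_, ?_, ?_⟩,
      ⟨r, -s, by linarith, rfl⟩⟩, ?_⟩
  · rw [valuation_det_zpow_smul hmul hπ0 hπ _ hA, Fintype.card_fin, hr]; ring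
  · rw [valuation_det_zpow_smul hmul hπ0 hπ _ hE, Fintype.card_fin, hvE, hs]; ring
  · rw [det_zpow_smul_mul_det_zpow_smul hπ0, Fintype.card_fin, Fintype.card_fin,
      show -r * d + s * n = 0 by linarith, hAE, zpow_zero, one_mul]
  · simp [fromBlocks_multiply, smul_smul, zpow_ne_zero _ hπ0]

theorem bijOn_mul_blockDiagUnimodular_centralPart
    (hmul : ∀ x y : K, x ≠ 0 → y ≠ 0 → v (x * y) = v x + v y)
    (hπ0 : π ≠ 0) (hπ : v π = 1) (hd : 1 ≤ d) (hn : 1 ≤ n) :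
    Set.BijOn (fun x => x.1 * x.2) (blockDiagUnimodular K v d n ×ˢ centralPart K π d n)
      (blockDiagCell K v d n) :=
  ⟨mapsTo_mul_blockDiagUnimodular_centralPart hmul hπ0 hπ,
    injOn_mul_blockDiagUnimodular_centralPart hmul hπ0 hπ hd hn,
    surjOn_mul_blockDiagUnimodular_centralPart hmul hπ0 hπ⟩

end DiagonalFactor

theorem refined_LU_decomposition_general
    (K : Type*) [Field K] (v : K → ℤ)
    (hmul : ∀ x y : K, x ≠ 0 → y ≠ 0 → v (x * y) = v x + v y)
    (π : K) (hπ0 : π ≠ 0) (hπ : v π = 1)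
    (d n : ℕ) (hd : 1 ≤ d) (hn : 1 ≤ n) :
    Set.BijOn
      (fun x : Matrix (Fin d ⊕ Fin n) (Fin d ⊕ Fin n) K ×
          Matrix (Fin d ⊕ Fin n) (Fin d ⊕ Fin n) K ×
          Matrix (Fin d ⊕ Fin n) (Fin d ⊕ Fin n) K ×
          Matrix (Fin d ⊕ Fin n) (Fin d ⊕ Fin n) K =>
        x.1 * x.2.1 * x.2.2.1 * x.2.2.2)
      (lowerUnipotent K d n ×ˢ (blockDiagUnimodular K v d n ×ˢ
        (centralPart K π d n ×ˢ upperUnipotent K d n)))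
      (bigCell K v d n) := by
  have hdiag := bijOn_mul_blockDiagUnimodular_centralPart hmul hπ0 hπ hd hn
  have hldu := bijOn_lowerUnipotent_blockDiagCell_upperUnipotent K v d n
  have hmem {u g z w} (hu : u ∈ lowerUnipotent K d n) (hg : g ∈ blockDiagUnimodular K v d n)
      (hz : z ∈ centralPart K π d n) (hw : w ∈ upperUnipotent K d n) :
      (u, g * z, w) ∈ lowerUnipotent K d n ×ˢ (blockDiagCell K v d n ×ˢ upperUnipotent K d n) :=
    ⟨hu, hdiag.mapsTo (x := (g, z)) ⟨hg, hz⟩, hw⟩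
  refine ⟨?_, ?_, ?_⟩
  · rintro ⟨u, g, z, w⟩ ⟨hu, hg, hz, hw⟩
    simpa only [mul_assoc] using hldu.mapsTo (hmem hu hg hz hw)
  · rintro ⟨u, g, z, w⟩ ⟨hu, hg, hz, hw⟩ ⟨u', g', z', w'⟩ ⟨hu', hg', hz', hw'⟩ h
    obtain ⟨rfl, hgz, rfl⟩ : u = u' ∧ g * z = g' * z' ∧ w = w' := by
      simpa using hldu.injOn (hmem hu hg hz hw) (hmem hu' hg' hz' hw')
        (by simpa only [mul_assoc] using h)
    obtain ⟨rfl, rfl⟩ : g = g' ∧ z = z' := by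
      simpa using hdiag.injOn (x₁ := (g, z)) (x₂ := (g', z')) ⟨hg, hz⟩ ⟨hg', hz'⟩ hgz
    rfl
  · intro M hM
    obtain ⟨⟨u, t, w⟩, ⟨hu, ht, hw⟩, rfl⟩ := hldu.surjOn hM
    obtain ⟨⟨g, z⟩, ⟨hg, hz⟩, rfl⟩ := hdiag.surjOn ht
    exact ⟨(u, g, z, w), ⟨hu, hg, hz, hw⟩, by simp only [mul_assoc]⟩

/-- Refined LU decomposition by blocks: for a field `K` with a surjective discrete valuation
`v : K^× → ℤ` and uniformizer `π`, the product map `(u⁻, g'', z, u⁺) ↦ u⁻ g'' z u⁺` is a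
bijection from `U⁻ × G'' × Z × U⁺` onto `𝒰_G ⊆ SL_{d+n}(K)`. -/
theorem refined_LU_decomposition
    (K : Type*) [Field K] (v : K → ℤ)
    (hmul : ∀ x y : K, x ≠ 0 → y ≠ 0 → v (x * y) = v x + v y)
    (hadd : ∀ x y : K, x ≠ 0 → y ≠ 0 → x + y ≠ 0 → min (v x) (v y) ≤ v (x + y))
    (hsurj : ∀ m : ℤ, ∃ x : K, x ≠ 0 ∧ v x = m)
    (π : K) (hπ0 : π ≠ 0) (hπ : v π = 1)
    (d n : ℕ) (hd : 1 ≤ d) (hn : 1 ≤ n) :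
    Set.BijOn
      (fun x : Matrix (Fin d ⊕ Fin n) (Fin d ⊕ Fin n) K ×
          Matrix (Fin d ⊕ Fin n) (Fin d ⊕ Fin n) K ×
          Matrix (Fin d ⊕ Fin n) (Fin d ⊕ Fin n) K ×
          Matrix (Fin d ⊕ Fin n) (Fin d ⊕ Fin n) K =>
        x.1 * x.2.1 * x.2.2.1 * x.2.2.2)
      (lowerUnipotent K d n ×ˢ (blockDiagUnimodular K v d n ×ˢ
        (centralPart K π d n ×ˢ upperUnipotent K d n)))
      (bigCell K v d n) :=
  refined_LU_decomposition_general K v hmul π hπ0 hπ d n hd hn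
end

section
/- Let R be an integral domain with fraction field K, let D ≥ 2 and 1 ≤ k ≤ D−1, and let Λ be a primitive k-lattice in R^D with K-span V_Λ. Let π: K^D → K^D/V_Λ be the canonical projection and let Λ^π = π(R^D) be the factor lattice. Then: (a) Λ^π is a free R-module of rank D−k whose K-span is all of K^D/V_Λ; and (b) the canonical K-linear isomorphism Θ: K^D/V_Λ → ((V_Λ)^⊥)*, induced by x ↦ (ℓ ↦ ℓ(x)), maps Λ^π onto the dual lattice (Λ^⊥)* = {φ ∈ ((V_Λ)^⊥)* : φ(ℓ) ∈ R for all ℓ ∈ Λ^⊥}. -/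
noncomputable section

/-- The coordinatewise embedding of `R^D` into `K^D`. -/
def piAlgebraMap (R K : Type*) [CommRing R] [CommRing K] [Algebra R K] (D : ℕ) :
    (Fin D → R) →ₗ[R] (Fin D → K) :=
  LinearMap.pi fun i => (Algebra.linearMap R K).comp (LinearMap.proj i)

/-- The standard lattice `R^{D,*}` in the dual space `(K^D)*`: the `R`-span of the dual
basis of the canonical basis, i.e. of the coordinate forms. -/
def dualStdLattice (R K : Type*) [CommRing R] [Field K] [Algebra R K] (D : ℕ) :
    Submodule R (Module.Dual K (Fin D → K)) :=
  Submodule.span R (Set.range fun i : Fin D => (LinearMap.proj i : (Fin D → K) →ₗ[K] K))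

/-- The canonical `K`-linear map `Θ : K^D ⧸ V_Λ → ((V_Λ)^⊥)*` induced by
`x ↦ (ℓ ↦ ℓ(x))`. -/
def factorTheta (K : Type*) [Field K] (D : ℕ) (VΛ : Submodule K (Fin D → K)) :
    ((Fin D → K) ⧸ VΛ) →ₗ[K] Module.Dual K ↥(VΛ.dualAnnihilator) :=
  VΛ.liftQ ((VΛ.dualAnnihilator).subtype.dualMap.comp (Module.Dual.eval K (Fin D → K)))
    (by
      intro x hx
      rw [LinearMap.mem_ker]
      ext ⟨ℓ, hℓ⟩
      simpa using ((Submodule.mem_dualAnnihilator _).mp hℓ x hx))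

/-- The dual lattice `(Λ^⊥)* ⊆ ((V_Λ)^⊥)*` of the orthogonal lattice
`Λ^⊥ = (V_Λ)^⊥ ∩ R^{D,*}`: the functionals on `(V_Λ)^⊥` taking `R`-integral values on
all elements of `(V_Λ)^⊥` lying in `R^{D,*}`. -/
def dualOfOrthogonalLattice (R K : Type*) [CommRing R] [Field K] [Algebra R K] (D : ℕ)
    (VΛ : Submodule K (Fin D → K)) :
    Submodule R (Module.Dual K ↥(VΛ.dualAnnihilator)) where
  carrier := {ψ | ∀ ℓ : Module.Dual K (Fin D → K), ∀ hℓ : ℓ ∈ VΛ.dualAnnihilator,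
    ℓ ∈ dualStdLattice R K D → ∃ r : R, ψ ⟨ℓ, hℓ⟩ = algebraMap R K r}
  add_mem' := by
    intro a b ha hb ℓ hℓ hℓ'
    obtain ⟨r, hr⟩ := ha ℓ hℓ hℓ'
    obtain ⟨s, hs⟩ := hb ℓ hℓ hℓ'
    exact ⟨r + s, by simp [hr, hs]⟩
  zero_mem' := fun ℓ hℓ hℓ' => ⟨0, by simp⟩
  smul_mem' := by
    intro c ψ hψ ℓ hℓ hℓ'
    obtain ⟨r, hr⟩ := hψ ℓ hℓ hℓ'
    exact ⟨c * r, by simp [hr, Algebra.smul_def]⟩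

/-!
Fix a basis `e` of the free module `R^D ⧸ Λ`. The forms `ℓ_j`, sending `x` to the
`j`-th coordinate of `x mod Λ` and extended to `K^D`, lie in `Λ^⊥`. They show that
`R^D ∩ V_Λ = Λ`, so `π` identifies `R^D ⧸ Λ` with `Λ^π`, which gives (a).
Lifting `e_j` to `c_j ∈ R^D`, every `ℓ ∈ (V_Λ)^⊥` equals `∑ ℓ(c_j) ℓ_j`, since both
sides vanish on `Λ` and agree on the `c_j`; hence a functional `ψ` integral on `Λ^⊥`
is `Θ(π(∑ ψ(ℓ_j) c_j))`, which gives (b).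
-/

open Submodule

section ExtendForm

variable {R K : Type*} [CommRing R] [CommRing K] [Algebra R K] {D : ℕ}

variable (K) in
def extendForm (g : (Fin D → R) →ₗ[R] R) :
    Module.Dual K (Fin D → K) :=
  ∑ i, algebraMap R K (g (Pi.single i 1)) • LinearMap.proj i

lemma extendForm_piAlgebraMap (g : (Fin D → R) →ₗ[R] R) (x : Fin D → R) :
    extendForm K g (piAlgebraMap R K D x) = algebraMap R K (g x) := by
  have : ((extendForm K g).restrictScalars R).comp (piAlgebraMap R K D) =
      (Algebra.linearMap R K).comp g := by
    refine LinearMap.pi_ext fun i r => ?_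
    rw [show Pi.single i r = r • Pi.single i (1 : R) by rw [← Pi.single_smul, smul_eq_mul, mul_one],
      map_smul, map_smul]
    congr 1
    simp [extendForm, piAlgebraMap, Pi.single_apply, apply_ite (algebraMap R K),
      Algebra.algebraMap_eq_smul_one]
  exact LinearMap.congr_fun this x

lemma span_range_piAlgebraMap : span K (Set.range (piAlgebraMap R K D)) = ⊤ := by
  classical
  refine eq_top_mono (span_mono (s := Set.range (Pi.basisFun K (Fin D))) ?_)
    (Pi.basisFun K (Fin D)).span_eq
  rintro _ ⟨i, rfl⟩
  refine ⟨Pi.single i 1, funext fun j => ?_⟩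
  simp [piAlgebraMap, Pi.single_apply, apply_ite (algebraMap R K)]

end ExtendForm

section Field

variable {R K : Type*} [CommRing R] [Field K] [Algebra R K] {D : ℕ}

lemma extendForm_mem_dualStdLattice (g : (Fin D → R) →ₗ[R] R) :
    extendForm K g ∈ dualStdLattice R K D :=
  sum_mem fun i _ => by
    rw [algebraMap_smul K (g (Pi.single i 1)) (LinearMap.proj i)]
    exact smul_mem _ _ (subset_span (Set.mem_range_self i))

lemma exists_apply_piAlgebraMap_eq_algebraMap {ℓ : Module.Dual K (Fin D → K)}
    (hℓ : ℓ ∈ dualStdLattice R K D) (x : Fin D → R) :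
    ∃ r : R, ℓ (piAlgebraMap R K D x) = algebraMap R K r := by
  induction hℓ using Submodule.span_induction with
  | mem ℓ hℓ =>
    obtain ⟨i, rfl⟩ := hℓ
    exact ⟨x i, rfl⟩
  | zero => exact ⟨0, by simp⟩
  | add ℓ ℓ' _ _ h h' =>
    obtain ⟨r, hr⟩ := h
    obtain ⟨r', hr'⟩ := h'
    exact ⟨r + r', by simp [hr, hr']⟩
  | smul c ℓ _ h =>
    obtain ⟨r, hr⟩ := h
    exact ⟨c * r, by simp [hr, Algebra.smul_def]⟩

variable (K) in
/-- The `K`-span `V_Λ` of a lattice `Λ ⊆ R^D`. -/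
abbrev latticeSpan (Λ : Submodule R (Fin D → R)) : Submodule K (Fin D → K) :=
  span K (piAlgebraMap R K D '' Λ)

variable (K) in
/-- The factor lattice `Λ^π = π(R^D) ⊆ K^D ⧸ V_Λ`. -/
abbrev factorLattice (Λ : Submodule R (Fin D → R)) :
    Submodule R ((Fin D → K) ⧸ latticeSpan K Λ) :=
  map ((latticeSpan K Λ).mkQ.restrictScalars R) (LinearMap.range (piAlgebraMap R K D))

variable {Λ : Submodule R (Fin D → R)}

lemma extendForm_mem_dualAnnihilator {g : (Fin D → R) →ₗ[R] R} (hg : ∀ x ∈ Λ, g x = 0) :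
    extendForm K g ∈ (latticeSpan K Λ).dualAnnihilator := by
  have : latticeSpan K Λ ≤ LinearMap.ker (extendForm K g) :=
    span_le.mpr <| by rintro _ ⟨x, hx, rfl⟩; simp [extendForm_piAlgebraMap, hg x hx]
  exact (mem_dualAnnihilator _).mpr fun w hw => this hw

variable {κ : Type*}

variable (K) in
def quotientCoordForm (e : Module.Basis κ R ((Fin D → R) ⧸ Λ)) (j : κ) :
    Module.Dual K (Fin D → K) :=
  extendForm K (e.coord j ∘ₗ Λ.mkQ)

lemma quotientCoordForm_piAlgebraMap (e : Module.Basis κ R ((Fin D → R) ⧸ Λ)) (j : κ)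
    (x : Fin D → R) :
    quotientCoordForm K e j (piAlgebraMap R K D x) = algebraMap R K (e.repr (Λ.mkQ x) j) :=
  extendForm_piAlgebraMap _ x

lemma quotientCoordForm_mem_dualAnnihilator (e : Module.Basis κ R ((Fin D → R) ⧸ Λ)) (j : κ) :
    quotientCoordForm K e j ∈ (latticeSpan K Λ).dualAnnihilator :=
  extendForm_mem_dualAnnihilator fun x hx => by
    simp [(Submodule.Quotient.mk_eq_zero Λ).mpr hx]

lemma piAlgebraMap_mem_latticeSpan_iff (hRK : Function.Injective (algebraMap R K))
    [Module.Free R ((Fin D → R) ⧸ Λ)] {x : Fin D → R} :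
    piAlgebraMap R K D x ∈ latticeSpan K Λ ↔ x ∈ Λ := by
  refine ⟨fun hx => ?_, fun hx => subset_span ⟨x, hx, rfl⟩⟩
  let e := Module.Free.chooseBasis R ((Fin D → R) ⧸ Λ)
  have hcoord (j) : e.repr (Λ.mkQ x) j = 0 := hRK <| by
    rw [← quotientCoordForm_piAlgebraMap (K := K),
      (mem_dualAnnihilator _).mp (quotientCoordForm_mem_dualAnnihilator e j) _ hx, map_zero]
  rw [← Submodule.Quotient.mk_eq_zero, ← Λ.mkQ_apply, ← e.forall_coord_eq_zero_iff]
  exact hcoord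

lemma ker_mkQ_comp_piAlgebraMap (hRK : Function.Injective (algebraMap R K))
    [Module.Free R ((Fin D → R) ⧸ Λ)] :
    LinearMap.ker ((latticeSpan K Λ).mkQ.restrictScalars R ∘ₗ piAlgebraMap R K D) = Λ := by
  ext x
  simp [piAlgebraMap_mem_latticeSpan_iff hRK]

variable (K) in
def quotientEquivFactorLattice (hRK : Function.Injective (algebraMap R K))
    [Module.Free R ((Fin D → R) ⧸ Λ)] : ((Fin D → R) ⧸ Λ) ≃ₗ[R] factorLattice K Λ :=
  (Λ.quotEquivOfEq _ (ker_mkQ_comp_piAlgebraMap hRK).symm).trans <|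
    (LinearMap.quotKerEquivRange _).trans (LinearEquiv.ofEq _ _ (LinearMap.range_comp _ _))

lemma span_factorLattice :
    span K (factorLattice K Λ : Set ((Fin D → K) ⧸ latticeSpan K Λ)) = ⊤ := by
  rw [map_coe, LinearMap.coe_range, LinearMap.coe_restrictScalars, span_image,
    span_range_piAlgebraMap, Submodule.map_top, range_mkQ]

lemma sub_sum_repr_smul_mem [Fintype κ] (e : Module.Basis κ R ((Fin D → R) ⧸ Λ))
    {c : κ → Fin D → R} (hc : ∀ j, Λ.mkQ (c j) = e j) (x : Fin D → R) :
    x - ∑ j, e.repr (Λ.mkQ x) j • c j ∈ Λ := by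
  rw [← Submodule.Quotient.eq, ← Λ.mkQ_apply, ← Λ.mkQ_apply, map_sum]
  simp only [map_smul, hc, e.sum_repr]

lemma eq_sum_smul_quotientCoordForm [Fintype κ] (e : Module.Basis κ R ((Fin D → R) ⧸ Λ))
    {c : κ → Fin D → R} (hc : ∀ j, Λ.mkQ (c j) = e j) {ℓ : Module.Dual K (Fin D → K)}
    (hℓ : ℓ ∈ (latticeSpan K Λ).dualAnnihilator) :
    ℓ = ∑ j, ℓ (piAlgebraMap R K D (c j)) • quotientCoordForm K e j := by
  refine LinearMap.ext_on_range (span_range_piAlgebraMap (R := R)) fun x => ?_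
  have hΛ : ℓ (piAlgebraMap R K D (x - ∑ j, e.repr (Λ.mkQ x) j • c j)) = 0 :=
    (mem_dualAnnihilator ℓ).mp hℓ _ (subset_span ⟨_, sub_sum_repr_smul_mem e hc x, rfl⟩)
  rw [map_sub, map_sub, sub_eq_zero] at hΛ
  simp only [hΛ, map_sum, map_smul, LinearMap.map_smul_of_tower]
  simp [quotientCoordForm_piAlgebraMap, Algebra.smul_def, mul_comm]

lemma factorTheta_mk (V : Submodule K (Fin D → K)) (x : Fin D → K) (ℓ : V.dualAnnihilator) :
    factorTheta K D V (Submodule.Quotient.mk x) ℓ = ℓ x :=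
  rfl

lemma map_factorTheta_factorLattice_le :
    map ((factorTheta K D (latticeSpan K Λ)).restrictScalars R) (factorLattice K Λ) ≤
      dualOfOrthogonalLattice R K D (latticeSpan K Λ) := by
  rintro _ ⟨_, ⟨_, ⟨x, rfl⟩, rfl⟩, rfl⟩ ℓ _ hℓ
  exact exists_apply_piAlgebraMap_eq_algebraMap hℓ x

lemma dualOfOrthogonalLattice_le_map_factorTheta [Module.Free R ((Fin D → R) ⧸ Λ)] :
    dualOfOrthogonalLattice R K D (latticeSpan K Λ) ≤
      map ((factorTheta K D (latticeSpan K Λ)).restrictScalars R) (factorLattice K Λ) := by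
  classical
  intro ψ hψ
  let e := Module.Free.chooseBasis R ((Fin D → R) ⧸ Λ)
  choose c hc using fun j => Λ.mkQ_surjective (e j)
  choose r hr using fun j => hψ _ (quotientCoordForm_mem_dualAnnihilator e j)
    (extendForm_mem_dualStdLattice _)
  refine ⟨_, mem_map_of_mem (LinearMap.mem_range_self _ (∑ j, r j • c j)), ?_⟩
  ext ⟨ℓ, hℓ⟩
  have hℓ_eq : (⟨ℓ, hℓ⟩ : (latticeSpan K Λ).dualAnnihilator) =
      ∑ j, ℓ (piAlgebraMap R K D (c j)) • ⟨_, quotientCoordForm_mem_dualAnnihilator e j⟩ :=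
    Subtype.ext <| by simpa using eq_sum_smul_quotientCoordForm e hc hℓ
  change ℓ (piAlgebraMap R K D (∑ j, r j • c j)) = ψ ⟨ℓ, hℓ⟩
  rw [hℓ_eq, map_sum, map_sum, map_sum]
  simp only [map_smul, LinearMap.map_smul_of_tower, hr]
  simp [Algebra.smul_def, mul_comm]

end Field

theorem factor_lattice_free_and_maps_to_dual_of_orthogonal_general
    (R K : Type*) [CommRing R] [Field K] [Algebra R K] [IsFractionRing R K]
    (D k : ℕ)
    (Λ : Submodule R (Fin D → R))
    (hqfree : Module.Free R ((Fin D → R) ⧸ Λ))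
    (hqrank : Module.rank R ((Fin D → R) ⧸ Λ) = D - k) :
    letI VΛ : Submodule K (Fin D → K) :=
      Submodule.span K (⇑(piAlgebraMap R K D) '' (Λ : Set (Fin D → R)))
    letI factorLattice : Submodule R ((Fin D → K) ⧸ VΛ) :=
      Submodule.map (VΛ.mkQ.restrictScalars R) (LinearMap.range (piAlgebraMap R K D))
    -- (a)
    (Module.Free R factorLattice ∧ Module.rank R factorLattice = D - k ∧
      Submodule.span K (factorLattice : Set ((Fin D → K) ⧸ VΛ)) = ⊤) ∧
    -- (b)
    Submodule.map ((factorTheta K D VΛ).restrictScalars R) factorLattice =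
      dualOfOrthogonalLattice R K D VΛ := by
  let eqv := quotientEquivFactorLattice K (IsFractionRing.injective R K) (Λ := Λ)
  exact ⟨⟨Module.Free.of_equiv eqv, by simpa [hqrank] using eqv.lift_rank_eq.symm,
      span_factorLattice⟩,
    le_antisymm map_factorTheta_factorLattice_le dualOfOrthogonalLattice_le_map_factorTheta⟩

/-- Let `Λ` be a primitive `k`-lattice in `R^D`, `R` a domain with fraction field `K`,
with `K`-span `V_Λ`, and let `π : K^D → K^D ⧸ V_Λ` be the canonical projection. Then
(a) the factor lattice `Λ^π = π(R^D)` is a free `R`-module of rank `D - k` whose `K`-span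
is all of `K^D ⧸ V_Λ`; and (b) the canonical map `Θ : K^D ⧸ V_Λ → ((V_Λ)^⊥)*` maps `Λ^π`
onto the dual lattice `(Λ^⊥)*` of the orthogonal lattice `Λ^⊥ = (V_Λ)^⊥ ∩ R^{D,*}`. -/
theorem factor_lattice_free_and_maps_to_dual_of_orthogonal
    (R K : Type*) [CommRing R] [IsDomain R] [Field K] [Algebra R K] [IsFractionRing R K]
    (D k : ℕ) (hD : 2 ≤ D) (hk : 1 ≤ k) (hkD : k ≤ D - 1)
    (Λ : Submodule R (Fin D → R))
    (hfree : Module.Free R Λ) (hrank : Module.rank R Λ = k)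
    (hqfree : Module.Free R ((Fin D → R) ⧸ Λ))
    (hqrank : Module.rank R ((Fin D → R) ⧸ Λ) = D - k) :
    letI VΛ : Submodule K (Fin D → K) :=
      Submodule.span K (⇑(piAlgebraMap R K D) '' (Λ : Set (Fin D → R)))
    letI factorLattice : Submodule R ((Fin D → K) ⧸ VΛ) :=
      Submodule.map (VΛ.mkQ.restrictScalars R) (LinearMap.range (piAlgebraMap R K D))
    -- (a)
    (Module.Free R factorLattice ∧ Module.rank R factorLattice = D - k ∧
      Submodule.span K (factorLattice : Set ((Fin D → K) ⧸ VΛ)) = ⊤) ∧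
    -- (b)
    Submodule.map ((factorTheta K D VΛ).restrictScalars R) factorLattice =
      dualOfOrthogonalLattice R K D VΛ :=
  factor_lattice_free_and_maps_to_dual_of_orthogonal_general R K D k Λ hqfree hqrank
end
end

section
/- Let K be a field equipped with a valuation with valuation ring O_v ⊆ K, and let d, n ≥ 1 with D = d + n. For every g ∈ GL_D(K) there exists a permutation matrix σ ∈ GL_D(K) such that, writing σg in blocks [[α, γ],[β, δ]] with α of size d×d, the matrix α is invertible and every entry of β α^{−1} lies in the valuation ring O_v. -/
/-!
Among all permutations `σ`, pick one maximising `v (det α)`; some `α` is invertible because the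
first `d` columns of `g` are linearly independent. By Cramer's rule, the `(i, j)` entry of
`β α⁻¹` is `det α' / det α`, where `α'` is the top-left block for `σ` composed with the
transposition of rows `j` and `d + i`, so its valuation is at most `1` by maximality.
-/

open Matrix

open Equiv Function

namespace Matrix

variable {l m n o R K : Type*}

theorem permMatrix_mul_eq_submatrix [Fintype l] [DecidableEq l] [NonAssocSemiring R]
    (σ : Perm l) (M : Matrix l m R) : σ.permMatrix R * M = M.submatrix σ id :=
  PEquiv.toMatrix_toPEquiv_mul σ M

theorem updateRow_submatrix_eq_submatrix_update [DecidableEq m] (M : Matrix l n R) (f : m → l)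
    (c : o → n) (j : m) (x : l) :
    (M.submatrix f c).updateRow j (fun k => M x (c k)) = M.submatrix (update f j x) c := by
  ext k k'
  by_cases hk : k = j
  · subst hk; simp
  · simp [hk]

theorem mul_inv_apply_eq_det_updateRow_div [Field K] [Fintype m] [DecidableEq m]
    (A : Matrix m m K) (B : Matrix n m K) (i : n) (j : m) :
    (B * A⁻¹) i j = (A.updateRow j (B i)).det / A.det := by
  by_cases hA : A.det = 0
  · rw [hA, div_zero, nonsing_inv_apply_not_isUnit A (by simp [hA]), Matrix.mul_zero, zero_apply]
  · rw [eq_div_iff hA, mul_comm, ← cramer_transpose_apply,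
      ← det_smul_inv_vecMul_eq_cramer_transpose A _ (isUnit_iff_ne_zero.2 hA)]
    rfl

theorem span_rows_submatrix_eq_top [Field K] [Fintype l] [DecidableEq l] {g : Matrix l l K}
    (hg : IsUnit g) {c : m → l} (hc : Injective c) :
    Submodule.span K (Set.range (g.submatrix id c)) = ⊤ := by
  refine eq_top_iff.2 fun y _ => ?_
  obtain ⟨z, hz⟩ := vecMul_surjective_iff_isUnit.2 hg (extend c y 0)
  change y ∈ Submodule.span K (Set.range (g.submatrix id c).row)
  rw [← range_vecMulLinear]
  exact ⟨z, funext fun j => by simpa [vecMul, dotProduct, hc.extend_apply] using congrFun hz (c j)⟩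

theorem exists_injective_isUnit_det_submatrix [Field K] [Fintype m] [DecidableEq m]
    (C : Matrix l m K) (hC : Submodule.span K (Set.range C) = ⊤) :
    ∃ r : m → l, Injective r ∧ IsUnit (C.submatrix r id).det := by
  obtain ⟨κ, a, ha, hspan, hli⟩ := exists_linearIndependent' K C
  have : Fintype κ := have := hli.finite; Fintype.ofFinite κ
  have hcard : Fintype.card m = Fintype.card κ := by
    rw [← finrank_span_eq_card hli, hspan, hC, finrank_top, Module.finrank_fintype_fun_eq_card]
  let e : m ≃ κ := Fintype.equivOfCardEq hcard
  refine ⟨a ∘ e, ha.comp e.injective, ?_⟩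
  rw [← isUnit_iff_isUnit_det, ← linearIndependent_rows_iff_isUnit]
  exact hli.comp e e.injective

theorem permMatrix_mul_toBlocks₁₁ [Fintype l] [Fintype m] [DecidableEq l] [DecidableEq m]
    [NonAssocSemiring R] (σ : Perm (l ⊕ m)) (M : Matrix (l ⊕ m) (l ⊕ m) R) :
    (σ.permMatrix R * M).toBlocks₁₁ = M.submatrix (σ ∘ Sum.inl) Sum.inl := by
  rw [permMatrix_mul_eq_submatrix]; rfl

theorem permMatrix_mul_toBlocks₂₁ [Fintype l] [Fintype m] [DecidableEq l] [DecidableEq m]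
    [NonAssocSemiring R] (σ : Perm (l ⊕ m)) (M : Matrix (l ⊕ m) (l ⊕ m) R) :
    (σ.permMatrix R * M).toBlocks₂₁ = M.submatrix (σ ∘ Sum.inr) Sum.inl := by
  rw [permMatrix_mul_eq_submatrix]; rfl

theorem exists_perm_isUnit_det_submatrix_inl [Field K] [Fintype m] [Fintype n] [DecidableEq m]
    [DecidableEq n] {g : Matrix (m ⊕ n) (m ⊕ n) K} (hg : IsUnit g) :
    ∃ σ : Perm (m ⊕ n), IsUnit (g.submatrix (σ ∘ Sum.inl) Sum.inl).det := by
  obtain ⟨r, hr, hdet⟩ :=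
    exists_injective_isUnit_det_submatrix _ (span_rows_submatrix_eq_top hg Sum.inl_injective)
  obtain ⟨σ, hσ⟩ := Perm.exists_extending_pair Sum.inl r Sum.inl_injective hr
  refine ⟨σ, ?_⟩
  rwa [show σ ∘ Sum.inl = r from funext hσ]

theorem mul_inv_apply_mem_of_valuation_det_updateRow_le [Field K] [Fintype m] [DecidableEq m]
    (O : ValuationSubring K) {A : Matrix m m K} (B : Matrix n m K) (i : n) (j : m)
    (h : O.valuation (A.updateRow j (B i)).det ≤ O.valuation A.det) : (B * A⁻¹) i j ∈ O := by
  rw [mul_inv_apply_eq_det_updateRow_div, ← O.valuation_le_one_iff, map_div₀]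
  exact div_le_one_of_le₀ h zero_le

end Matrix

theorem Equiv.Perm.mul_swap_inl_inr_comp_inl {m n : Type*} [DecidableEq m] [DecidableEq n]
    (σ : Perm (m ⊕ n)) (j : m) (i : n) :
    (σ * swap (Sum.inl j) (Sum.inr i)) ∘ Sum.inl = update (σ ∘ Sum.inl) j (σ (Sum.inr i)) := by
  ext k
  by_cases hk : k = j
  · subst hk; simp
  · simp [hk, swap_apply_of_ne_of_ne]

theorem exists_perm_row_reduction_general
    (K : Type*) [Field K] (Ov : ValuationSubring K) (d n : ℕ)
    (g : Matrix (Fin d ⊕ Fin n) (Fin d ⊕ Fin n) K) (hg : IsUnit g) :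
    ∃ σ : Equiv.Perm (Fin d ⊕ Fin n),
      IsUnit ((σ.permMatrix K * g).toBlocks₁₁).det ∧
      ∀ (i : Fin n) (j : Fin d),
        ((σ.permMatrix K * g).toBlocks₂₁ * ((σ.permMatrix K * g).toBlocks₁₁)⁻¹) i j ∈ Ov := by
  classical
  let minor (τ : Perm (Fin d ⊕ Fin n)) := g.submatrix (τ ∘ Sum.inl) Sum.inl
  obtain ⟨σ₀, hσ₀⟩ := exists_perm_isUnit_det_submatrix_inl hg
  obtain ⟨σ, hσ⟩ := Finite.exists_max fun τ => Ov.valuation (minor τ).det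
  have hdet : (minor σ).det ≠ 0 := by
    intro h
    have hσ₀_le := hσ σ₀
    rw [h, map_zero, le_zero_iff, map_eq_zero] at hσ₀_le
    exact hσ₀.ne_zero hσ₀_le
  refine ⟨σ, ?_, fun i j => ?_⟩
  · rw [permMatrix_mul_toBlocks₁₁]
    exact isUnit_iff_ne_zero.2 hdet
  · rw [permMatrix_mul_toBlocks₁₁, permMatrix_mul_toBlocks₂₁]
    refine mul_inv_apply_mem_of_valuation_det_updateRow_le Ov _ i j ?_
    have hswap := updateRow_submatrix_eq_submatrix_update g (σ ∘ Sum.inl) Sum.inl j (σ (Sum.inr i))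
    rw [← Perm.mul_swap_inl_inr_comp_inl] at hswap
    exact hswap ▸ hσ _

/-- Let `K` be a field with a valuation subring `O_v` and let `g ∈ GL_{d+n}(K)`. Then
there is a permutation matrix `σ` such that, writing `σg` in blocks `[[α, γ],[β, δ]]`
with `α` of size `d × d`, the block `α` is invertible and all the entries of `β α⁻¹`
lie in the valuation ring `O_v`. -/
theorem exists_perm_row_reduction
    (K : Type*) [Field K] (Ov : ValuationSubring K) (d n : ℕ) (hd : 1 ≤ d) (hn : 1 ≤ n)
    (g : Matrix (Fin d ⊕ Fin n) (Fin d ⊕ Fin n) K) (hg : IsUnit g) :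
    ∃ σ : Equiv.Perm (Fin d ⊕ Fin n),
      IsUnit ((σ.permMatrix K * g).toBlocks₁₁).det ∧
      ∀ (i : Fin n) (j : Fin d),
        ((σ.permMatrix K * g).toBlocks₂₁ * ((σ.permMatrix K * g).toBlocks₁₁)⁻¹) i j ∈ Ov :=
  exists_perm_row_reduction_general K Ov d n g hg
end
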